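/- arXiv:2510.27643 — 3 statements merged into one kernel-verified Lean document; each statement's English description precedes it below -/
import Mathlib

section
/- Let c > 0, L > 1/c, and A, B ∈ ℝ, and define f : ℝ → ℝ by f(z) = A·sin(c z) + B·cos(c z). If ∫₀^L f(z)² dz ≤ 1, then for every z ∈ [0, L] one has f(z)² ≤ (L/2 − 1/(2c))⁻¹. -/
/-!
Squaring turns `A sin(cz) + B cos(cz)` into its mean value `(A² + B²)/2` plus a sinusoid of
frequency `2c` and amplitude `(A² + B²)/2`, whose integral over any interval starting at `0` is at
least `-(A² + B²)/(2c)`. Hence `∫₀^L f² ≥ (A² + B²)(L/2 - 1/(2c))`, while `f² ≤ A² + B²` pointwise.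
-/

open Real

lemma sq_mul_sin_add_mul_cos_le (a b x : ℝ) : (a * sin x + b * cos x) ^ 2 ≤ a ^ 2 + b ^ 2 := by
  nlinarith [sin_sq_add_cos_sq x, sq_nonneg (a * cos x - b * sin x)]

lemma abs_mul_sin_add_mul_cos_le (a b x : ℝ) : |a * sin x + b * cos x| ≤ √(a ^ 2 + b ^ 2) :=
  abs_le_sqrt (sq_mul_sin_add_mul_cos_le a b x)

lemma integral_mul_cos_add_mul_sin (a b k L : ℝ) (hk : k ≠ 0) :
    ∫ z in (0 : ℝ)..L, (a * cos (k * z) + b * sin (k * z)) =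
      (a * sin (k * L) - b * cos (k * L) + b) / k := by
  have hcos : Continuous fun z => a * cos (k * z) := by fun_prop
  have hsin : Continuous fun z => b * sin (k * z) := by fun_prop
  rw [intervalIntegral.integral_add (hcos.intervalIntegrable 0 L) (hsin.intervalIntegrable 0 L),
    intervalIntegral.integral_const_mul, intervalIntegral.integral_const_mul,
    intervalIntegral.integral_comp_mul_left (fun z => cos z) hk,
    intervalIntegral.integral_comp_mul_left (fun z => sin z) hk]
  simp only [integral_cos, integral_sin, mul_zero, sin_zero, cos_zero, smul_eq_mul]
  field_simp
  ring

lemma neg_two_mul_sqrt_div_le_integral_mul_cos_add_mul_sin (a b k L : ℝ) (hk : 0 < k) :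
    -(2 * √(a ^ 2 + b ^ 2)) / k ≤ ∫ z in (0 : ℝ)..L, (a * cos (k * z) + b * sin (k * z)) := by
  rw [integral_mul_cos_add_mul_sin a b k L hk.ne']
  gcongr
  have hend : |a * sin (k * L) + -b * cos (k * L)| ≤ √(a ^ 2 + b ^ 2) := by
    simpa using abs_mul_sin_add_mul_cos_le a (-b) (k * L)
  have hb : |b| ≤ √(a ^ 2 + b ^ 2) := abs_le_sqrt (by nlinarith)
  linarith [neg_abs_le (a * sin (k * L) + -b * cos (k * L)), neg_abs_le b]

lemma mul_sin_add_mul_cos_sq (A B x : ℝ) :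
    (A * sin x + B * cos x) ^ 2 =
      (A ^ 2 + B ^ 2) / 2 + ((B ^ 2 - A ^ 2) / 2 * cos (2 * x) + A * B * sin (2 * x)) := by
  rw [cos_two_mul', sin_two_mul]
  linear_combination (A ^ 2 + B ^ 2) / 2 * sin_sq_add_cos_sq x

lemma mul_sub_le_integral_mul_sin_add_mul_cos_sq (A B c L : ℝ) (hc : 0 < c) :
    (A ^ 2 + B ^ 2) * (L / 2 - 1 / (2 * c)) ≤
      ∫ z in (0 : ℝ)..L, (A * sin (c * z) + B * cos (c * z)) ^ 2 := by
  set a := (B ^ 2 - A ^ 2) / 2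
  have hamp : √(a ^ 2 + (A * B) ^ 2) = (A ^ 2 + B ^ 2) / 2 := by
    rw [show a ^ 2 + (A * B) ^ 2 = ((A ^ 2 + B ^ 2) / 2) ^ 2 by ring]
    exact sqrt_sq (by positivity)
  have hosc := neg_two_mul_sqrt_div_le_integral_mul_cos_add_mul_sin a (A * B) (2 * c) L
    (by positivity)
  have hcont : Continuous fun z => a * cos (2 * c * z) + A * B * sin (2 * c * z) := by fun_prop
  simp_rw [mul_sin_add_mul_cos_sq, ← mul_assoc]
  rw [intervalIntegral.integral_add intervalIntegrable_const (hcont.intervalIntegrable 0 L),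
    intervalIntegral.integral_const, smul_eq_mul]
  rw [hamp] at hosc
  calc (A ^ 2 + B ^ 2) * (L / 2 - 1 / (2 * c))
      = (L - 0) * ((A ^ 2 + B ^ 2) / 2) + -(2 * ((A ^ 2 + B ^ 2) / 2)) / (2 * c) := by
        field_simp; ring
    _ ≤ _ := by gcongr

/-- If `f(z) = A·sin(c z) + B·cos(c z)` with `c > 0`, `L > 1/c`, and
`∫₀^L f(z)² dz ≤ 1`, then for every `z ∈ [0, L]`, `f(z)² ≤ (L/2 − 1/(2c))⁻¹`. -/
theorem sinusoid_sup_bound (c L A B : ℝ) (hc : 0 < c) (hL : 1 / c < L)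
    (f : ℝ → ℝ) (hf : ∀ z, f z = A * Real.sin (c * z) + B * Real.cos (c * z))
    (hint : (∫ z in (0 : ℝ)..L, f z ^ 2) ≤ 1) :
    ∀ z ∈ Set.Icc (0 : ℝ) L, f z ^ 2 ≤ (L / 2 - 1 / (2 * c))⁻¹ := by
  intro z _
  have hpos : 0 < L / 2 - 1 / (2 * c) := by
    rw [show 1 / (2 * c) = 1 / c / 2 by ring]
    linarith
  have hsq : f z ^ 2 * (L / 2 - 1 / (2 * c)) ≤ 1 :=
    calc f z ^ 2 * (L / 2 - 1 / (2 * c))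
        ≤ (A ^ 2 + B ^ 2) * (L / 2 - 1 / (2 * c)) := by
          gcongr
          exact hf z ▸ sq_mul_sin_add_mul_cos_le A B (c * z)
      _ ≤ ∫ z in (0 : ℝ)..L, f z ^ 2 := by
          simpa only [hf] using mul_sub_le_integral_mul_sin_add_mul_cos_sq A B c L hc
      _ ≤ 1 := hint
  rwa [← one_div, le_div_iff₀ hpos]
end

section
/- Let U be an invertible n×n real matrix, set C := U^{−1}·(Uᵀ)^{−1}, let G be an n×n real matrix and κ ∈ ℝ, and suppose κ²·C + G is invertible. Define Λ := U·(κ²·C + G)·Uᵀ. Then for every natural number m, the matrix C·(κ²·I + C^{−1}·G)^m is invertible and Uᵀ·Λ^{−m}·U = (C·(κ²·I + C^{−1}·G)^m)^{−1}. -/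
/-!
Write `M := κ²C + G`, `P := Uᵀ` and `A := U * M`. Then `C⁻¹ = P * U`, so `κ²I + C⁻¹G = C⁻¹M = P * A`,
while `Λ = A * P` and `C = U⁻¹ * P⁻¹`. The products `P * A` and `A * P` are conjugate by `P`, hence
`C * (C⁻¹M)^m = U⁻¹ * P⁻¹ * (P * A)^m = U⁻¹ * Λ^m * P⁻¹`, a product of invertible matrices whose
inverse is `Uᵀ * Λ^{-m} * U`.
-/

open Matrix

namespace Matrix

variable {n α : Type*} [Fintype n] [DecidableEq n] [CommRing α]

theorem nonsing_inv_mul_nonsing_inv_inv {A B : Matrix n n α} (hA : IsUnit A) (hB : IsUnit B) :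
    (A⁻¹ * B⁻¹)⁻¹ = B * A := by
  rw [mul_inv_rev, nonsing_inv_nonsing_inv A ((isUnit_iff_isUnit_det A).mp hA),
    nonsing_inv_nonsing_inv B ((isUnit_iff_isUnit_det B).mp hB)]

theorem nonsing_inv_mul_mul_nonsing_inv_inv {A B : Matrix n n α} (hA : IsUnit A) (hB : IsUnit B)
    (X : Matrix n n α) : (A⁻¹ * X * B⁻¹)⁻¹ = B * X⁻¹ * A := by
  rw [mul_inv_rev, mul_inv_rev, nonsing_inv_nonsing_inv A ((isUnit_iff_isUnit_det A).mp hA),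
    nonsing_inv_nonsing_inv B ((isUnit_iff_isUnit_det B).mp hB), Matrix.mul_assoc]

theorem semiconjBy_nonsing_inv_mul_mul {P : Matrix n n α} (hP : IsUnit P) (A : Matrix n n α) :
    SemiconjBy P⁻¹ (P * A) (A * P) := by
  have hPdet : IsUnit P.det := (isUnit_iff_isUnit_det P).mp hP
  rw [SemiconjBy, ← Matrix.mul_assoc, nonsing_inv_mul P hPdet, Matrix.mul_assoc,
    mul_nonsing_inv P hPdet, Matrix.one_mul, Matrix.mul_one]

theorem smul_one_add_nonsing_inv_mul {C : Matrix n n α} (hC : IsUnit C) (a : α)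
    (G : Matrix n n α) : a • 1 + C⁻¹ * G = C⁻¹ * (a • C + G) := by
  rw [Matrix.mul_add, Matrix.mul_smul, nonsing_inv_mul C ((isUnit_iff_isUnit_det C).mp hC)]

end Matrix

/-- FEM precision-matrix identity (half-integer smoothness): with `U`
invertible, `C := U⁻¹·(Uᵀ)⁻¹`, `κ²C + G` invertible, and
`Λ := U·(κ²C + G)·Uᵀ`, for every `m : ℕ` the matrix
`Q := C·(κ²I + C⁻¹G)^m` is invertible and `Uᵀ·Λ^{−m}·U = Q⁻¹`. -/
theorem fem_precision_matrix_identity {n : ℕ}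
    (U G C Λ : Matrix (Fin n) (Fin n) ℝ) (hU : IsUnit U) (κ : ℝ)
    (hC : C = U⁻¹ * (Uᵀ)⁻¹)
    (hM : IsUnit (κ ^ 2 • C + G))
    (hΛ : Λ = U * (κ ^ 2 • C + G) * Uᵀ) :
    ∀ m : ℕ,
      IsUnit (C * (κ ^ 2 • (1 : Matrix (Fin n) (Fin n) ℝ) + C⁻¹ * G) ^ m) ∧
      Uᵀ * (Λ ^ m)⁻¹ * U =
        (C * (κ ^ 2 • (1 : Matrix (Fin n) (Fin n) ℝ) + C⁻¹ * G) ^ m)⁻¹ := by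
  intro m
  have hUt : IsUnit Uᵀ := (isUnit_transpose U).mpr hU
  have hCunit : IsUnit C :=
    hC ▸ (isUnit_nonsing_inv_iff.mpr hU).mul (isUnit_nonsing_inv_iff.mpr hUt)
  have hCinv : C⁻¹ = Uᵀ * U := hC ▸ nonsing_inv_mul_nonsing_inv_inv hU hUt
  have hQ : C * (κ ^ 2 • (1 : Matrix (Fin n) (Fin n) ℝ) + C⁻¹ * G) ^ m
      = U⁻¹ * Λ ^ m * (Uᵀ)⁻¹ := by
    have hconj : (Uᵀ)⁻¹ * (Uᵀ * (U * (κ ^ 2 • C + G))) ^ m = Λ ^ m * (Uᵀ)⁻¹ :=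
      hΛ ▸ ((semiconjBy_nonsing_inv_mul_mul hUt (U * (κ ^ 2 • C + G))).pow_right m).eq
    rw [smul_one_add_nonsing_inv_mul hCunit, hCinv, Matrix.mul_assoc Uᵀ U]
    nth_rw 1 [hC]
    rw [Matrix.mul_assoc, hconj, Matrix.mul_assoc]
  have hΛunit : IsUnit Λ := hΛ ▸ (hU.mul hM).mul hUt
  rw [hQ, nonsing_inv_mul_mul_nonsing_inv_inv hU hUt]
  exact ⟨((isUnit_nonsing_inv_iff.mpr hU).mul (hΛunit.pow m)).mul
    (isUnit_nonsing_inv_iff.mpr hUt), rfl⟩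
end

section
/- Let U be an invertible n×n real matrix, set C := U^{−1}·(Uᵀ)^{−1}, let G be a symmetric n×n real matrix and κ ∈ ℝ, and define Λ := U·(κ²·C + G)·Uᵀ. Let p_ℓ and p_r be polynomials with real coefficients, and set P_ℓ := p_ℓ(κ²·I + C^{−1}·G) and P_r := p_r(κ²·I + C^{−1}·G). If P_ℓ is invertible, then p_ℓ(Λ) is invertible and Uᵀ·p_r(Λ)·(p_ℓ(Λ))^{−2}·p_r(Λ)·U = P_r·(P_ℓᵀ·C·P_ℓ)^{−1}·P_rᵀ. -/
/-!
The matrix `κ²I + C⁻¹G` is similar, through `Uᵀ`, to the symmetric matrix `Λ`, so `P_ℓ` and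
`P_r` are the same similarity applied to the symmetric matrices `p_ℓ(Λ)` and `p_r(Λ)`. Since
`C = U⁻¹U⁻ᵀ`, the congruence `P_ℓᵀ C P_ℓ` collapses to `U⁻¹ p_ℓ(Λ)² U⁻ᵀ`, and inverting it and
sandwiching between `P_r` and `P_rᵀ` cancels every remaining factor of `U`.
-/

open Matrix Polynomial

theorem Polynomial.aeval_units_conj {R A : Type*} [CommSemiring R] [Semiring A] [Algebra R A]
    (u : Aˣ) (a : A) (p : R[X]) : aeval (↑u * a * ↑u⁻¹) p = ↑u * aeval a p * ↑u⁻¹ :=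
  aeval_algHom_apply (MulSemiringAction.toAlgEquiv R A (ConjAct.toConjAct u)) a p

namespace Matrix

variable {m R : Type*} [Fintype m] [CommRing R]

theorem IsSymm.mul_mul_transpose {S : Matrix m m R} (hS : S.IsSymm) (U : Matrix m m R) :
    (U * S * Uᵀ).IsSymm := by
  rw [IsSymm, transpose_mul, transpose_mul, transpose_transpose, hS.eq, mul_assoc]

variable [DecidableEq m]

theorem aeval_conj {V : Matrix m m R} (hV : IsUnit V) (M : Matrix m m R) (p : R[X]) :
    aeval (V * M * V⁻¹) p = V * aeval M p * V⁻¹ := by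
  simpa [coe_units_inv] using aeval_units_conj hV.unit M p

theorem isUnit_conj_iff {V : Matrix m m R} (hV : IsUnit V) (M : Matrix m m R) :
    IsUnit (V * M * V⁻¹) ↔ IsUnit M := by
  simp only [isUnit_iff_isUnit_det, det_conj hV]

theorem transpose_aeval (M : Matrix m m R) (p : R[X]) : (aeval M p)ᵀ = aeval Mᵀ p := by
  simp only [aeval_eq_sum_range, transpose_sum, transpose_smul, transpose_pow]

theorem IsSymm.aeval {M : Matrix m m R} (hM : M.IsSymm) (p : R[X]) : (aeval M p).IsSymm := by
  rw [IsSymm, transpose_aeval, hM.eq]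

theorem IsSymm.transpose_conj_transpose {M : Matrix m m R} (hM : M.IsSymm) (U : Matrix m m R) :
    (Uᵀ * M * Uᵀ⁻¹)ᵀ = U⁻¹ * M * U := by
  rw [transpose_mul, transpose_mul, ← transpose_nonsing_inv, transpose_transpose,
    transpose_transpose, hM.eq, mul_assoc]

theorem conj_mul_inv_gram_mul_conj_transpose {U L M : Matrix m m R} (hU : IsUnit U)
    (hL : L.IsSymm) (hM : M.IsSymm) :
    Uᵀ * M * Uᵀ⁻¹ * ((Uᵀ * L * Uᵀ⁻¹)ᵀ * (U⁻¹ * Uᵀ⁻¹) * (Uᵀ * L * Uᵀ⁻¹))⁻¹ *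
        (Uᵀ * M * Uᵀ⁻¹)ᵀ = Uᵀ * M * (L ^ 2)⁻¹ * M * U := by
  have hd : IsUnit U.det := (isUnit_iff_isUnit_det U).mp hU
  have hdT : IsUnit Uᵀ.det := by rwa [det_transpose]
  have hgram : (Uᵀ * L * Uᵀ⁻¹)ᵀ * (U⁻¹ * Uᵀ⁻¹) * (Uᵀ * L * Uᵀ⁻¹) = U⁻¹ * L ^ 2 * Uᵀ⁻¹ := by
    rw [hL.transpose_conj_transpose]
    simp only [mul_assoc, sq, mul_nonsing_inv_cancel_left _ _ hd,
      nonsing_inv_mul_cancel_left _ _ hdT]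
  rw [hgram, hM.transpose_conj_transpose, mul_inv_rev, mul_inv_rev,
    nonsing_inv_nonsing_inv _ hd, nonsing_inv_nonsing_inv _ hdT]
  simp only [mul_assoc, mul_nonsing_inv_cancel_left _ _ hd, nonsing_inv_mul_cancel_left _ _ hdT]

theorem smul_one_add_inv_mul_eq_conj {U : Matrix m m R} (hU : IsUnit U) (c : R)
    (G : Matrix m m R) :
    c • 1 + (U⁻¹ * Uᵀ⁻¹)⁻¹ * G = Uᵀ * (U * (c • (U⁻¹ * Uᵀ⁻¹) + G) * Uᵀ) * Uᵀ⁻¹ := by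
  have hd : IsUnit U.det := (isUnit_iff_isUnit_det U).mp hU
  have hdT : IsUnit Uᵀ.det := by rwa [det_transpose]
  rw [mul_inv_rev, nonsing_inv_nonsing_inv _ hd, nonsing_inv_nonsing_inv _ hdT]
  simp only [mul_assoc, mul_nonsing_inv _ hdT, mul_one, mul_add, mul_smul_comm,
    mul_nonsing_inv_cancel_left _ _ hd]

end Matrix

/-- Core identity of the rational FEM kernel (Lemma 3.3): with `U`
invertible, `C := U⁻¹·(Uᵀ)⁻¹`, `G` symmetric, `Λ := U·(κ²C + G)·Uᵀ`,
`P_ℓ := p_ℓ(κ²I + C⁻¹G)` and `P_r := p_r(κ²I + C⁻¹G)`, if `P_ℓ` is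
invertible then `p_ℓ(Λ)` is invertible and
`Uᵀ·p_r(Λ)·(p_ℓ(Λ))⁻²·p_r(Λ)·U = P_r·(P_ℓᵀ·C·P_ℓ)⁻¹·P_rᵀ`. -/
theorem rational_fem_kernel_identity {n : ℕ}
    (U G C Λ Pl Pr : Matrix (Fin n) (Fin n) ℝ) (hU : IsUnit U) (κ : ℝ)
    (hC : C = U⁻¹ * (Uᵀ)⁻¹) (hGsymm : G.IsSymm)
    (hΛ : Λ = U * (κ ^ 2 • C + G) * Uᵀ)
    (pl pr : Polynomial ℝ)
    (hPl : Pl = aeval (κ ^ 2 • (1 : Matrix (Fin n) (Fin n) ℝ) + C⁻¹ * G) pl)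
    (hPr : Pr = aeval (κ ^ 2 • (1 : Matrix (Fin n) (Fin n) ℝ) + C⁻¹ * G) pr)
    (hPl_unit : IsUnit Pl) :
    IsUnit (aeval Λ pl) ∧
    Uᵀ * aeval Λ pr * ((aeval Λ pl) ^ 2)⁻¹ * aeval Λ pr * U =
      Pr * (Plᵀ * C * Pl)⁻¹ * Prᵀ := by
  have hUT : IsUnit Uᵀ := (isUnit_transpose U).mpr hU
  have hsimilar : κ ^ 2 • 1 + C⁻¹ * G = Uᵀ * Λ * Uᵀ⁻¹ := by
    rw [hΛ, hC, smul_one_add_inv_mul_eq_conj hU]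
  have hCsymm : C.IsSymm := by
    rw [hC, ← transpose_nonsing_inv]
    exact isSymm_mul_transpose_self U⁻¹
  have hΛsymm : Λ.IsSymm := hΛ ▸ ((hCsymm.smul _).add hGsymm).mul_mul_transpose U
  rw [hsimilar, aeval_conj hUT] at hPl hPr
  subst hPl hPr hC
  exact ⟨(isUnit_conj_iff hUT _).mp hPl_unit,
    (conj_mul_inv_gram_mul_conj_transpose hU (hΛsymm.aeval pl) (hΛsymm.aeval pr)).symm⟩
end
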